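/- For any ICC digraph D, the optimal broadcast rate β(D) = inf_t β_t(D) equals n − k + 1, where n is the number of vertices and k the number of Type-I paths. -/

import Mathlib

/-- An ICC digraph with `k` Type-I paths. `n1 i ≥ 1` is the number of vertices of
Type-I path `P_i`; `n2 i j` is the number of vertices of Type-II path `P_{i,j}`
(`0` if empty, and `n2 i i = 0`); `q i j` (1-based, `1 ≤ q i j ≤ n1 j`) is the
index of the vertex of `P_j` that the arc leaving `P_{i,j}` (or, if `P_{i,j}` is
empty, the arc leaving the terminal vertex of `P_i`) points to. -/
structure ICCDigraph (k : ℕ) where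
  n1 : Fin k → ℕ
  hn1 : ∀ i, 1 ≤ n1 i
  n2 : Fin k → Fin k → ℕ
  hdiag : ∀ i, n2 i i = 0
  q : Fin k → Fin k → ℕ
  hq1 : ∀ i j, 1 ≤ q i j
  hq2 : ∀ i j, q i j ≤ n1 j

namespace ICCDigraph

variable {k : ℕ} (D : ICCDigraph k)

/-- The vertex set: vertices `v_{a+1}^i = ⟨i, a⟩` of Type-I paths (0-based `a`),
and vertices `v_{b+1}^{ij} = ⟨(i,j), b⟩` of Type-II paths. -/
abbrev Vtx : Type :=
  (Σ i : Fin k, Fin (D.n1 i)) ⊕ (Σ p : Fin k × Fin k, Fin (D.n2 p.1 p.2))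

/-- The terminal vertex `v_{n_i}^i` of Type-I path `P_i`. -/
def terminal (i : Fin k) : D.Vtx :=
  Sum.inl ⟨i, ⟨D.n1 i - 1, by have := D.hn1 i; omega⟩⟩

/-- The arc relation of the ICC digraph: arcs along Type-I and Type-II paths,
and the interconnecting arcs. -/
def Arc : D.Vtx → D.Vtx → Prop
  | Sum.inl ⟨i, a⟩, Sum.inl ⟨j, a'⟩ =>
      (i = j ∧ (a' : ℕ) = (a : ℕ) + 1) ∨
      (i ≠ j ∧ (a : ℕ) = D.n1 i - 1 ∧ D.n2 i j = 0 ∧ (a' : ℕ) = D.q i j - 1)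
  | Sum.inl ⟨i, a⟩, Sum.inr ⟨p, b⟩ =>
      i = p.1 ∧ (a : ℕ) = D.n1 i - 1 ∧ (b : ℕ) = 0
  | Sum.inr ⟨p, b⟩, Sum.inr ⟨p', b'⟩ =>
      p = p' ∧ (b' : ℕ) = (b : ℕ) + 1
  | Sum.inr ⟨p, b⟩, Sum.inl ⟨j, a⟩ =>
      p.2 = j ∧ (b : ℕ) = D.n2 p.1 p.2 - 1 ∧ (a : ℕ) = D.q p.1 p.2 - 1

/-- A closed directed walk (cycle) starting and ending at `v`, visiting the
vertices `v :: l`. -/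
def IsClosedWalk (v : D.Vtx) (l : List D.Vtx) : Prop :=
  List.Chain D.Arc v (l ++ [v])

/-- `S` induces an acyclic subdigraph: no directed cycle lies within `S`. -/
def AcyclicOn (S : Finset D.Vtx) : Prop :=
  ¬ ∃ (v : D.Vtx) (l : List D.Vtx), v ∈ S ∧ (∀ u ∈ l, u ∈ S) ∧ D.IsClosedWalk v l

open Classical in
/-- `MAIS(D)`: the maximum order of an acyclic induced subdigraph. -/
noncomputable def mais : ℕ :=
  (Finset.univ.filter fun S : Finset D.Vtx => D.AcyclicOn S).sup Finset.card

/-- The message (1-based index `a`) of the `a`-th vertex of Type-I path `P_i`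
(`0` if out of range). -/
def msgI {t : ℕ} (x : D.Vtx → Fin t → ZMod 2) (i : Fin k) (a : ℕ) :
    Fin t → ZMod 2 :=
  if h : 1 ≤ a ∧ a ≤ D.n1 i then x (Sum.inl ⟨i, ⟨a - 1, by omega⟩⟩) else 0

/-- The message (1-based index `b`) of the `b`-th vertex of Type-II path
`P_{i,j}` (`0` if out of range). -/
def msgII {t : ℕ} (x : D.Vtx → Fin t → ZMod 2) (i j : Fin k) (b : ℕ) :
    Fin t → ZMod 2 :=
  if h : 1 ≤ b ∧ b ≤ D.n2 i j then x (Sum.inr ⟨(i, j), ⟨b - 1, by show b - 1 < D.n2 i j; omega⟩⟩) else 0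

/-- Index set of the ICC code's codewords: the `n_i - 1` codewords along each
Type-I path, the `n_{ij} - 1` codewords along each Type-II path, one codeword per
nonempty Type-II path, and the single codeword `⊕ᵢ x_{n_i}^i`. -/
abbrev CodeIdx : Type :=
  (Σ i : Fin k, Fin (D.n1 i - 1)) ⊕
    ((Σ p : Fin k × Fin k, Fin (D.n2 p.1 p.2 - 1)) ⊕
      (({p : Fin k × Fin k // 1 ≤ D.n2 p.1 p.2}) ⊕ Unit))

/-- The ICC code: `w_a^i = x_a^i ⊕ x_{a+1}^i`, `w_b^{ij} = x_b^{ij} ⊕ x_{b+1}^{ij}`,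
`w_{n_{ij}}^{ij} = x_{n_{ij}}^{ij} ⊕ x_{q_i}^j`, and `w' = ⊕ᵢ x_{n_i}^i`. -/
def code {t : ℕ} (x : D.Vtx → Fin t → ZMod 2) : D.CodeIdx → Fin t → ZMod 2
  | Sum.inl ⟨i, a⟩ => D.msgI x i ((a : ℕ) + 1) + D.msgI x i ((a : ℕ) + 2)
  | Sum.inr (Sum.inl ⟨p, b⟩) =>
      D.msgII x p.1 p.2 ((b : ℕ) + 1) + D.msgII x p.1 p.2 ((b : ℕ) + 2)
  | Sum.inr (Sum.inr (Sum.inl ⟨p, _⟩)) =>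
      D.msgII x p.1 p.2 (D.n2 p.1 p.2) + D.msgI x p.2 (D.q p.1 p.2)
  | Sum.inr (Sum.inr (Sum.inr _)) => ∑ i : Fin k, D.msgI x i (D.n1 i)

end ICCDigraph


/-!
For the upper bound, the ICC code is linear, so it is decodable at `v` as soon as every message
in its kernel that vanishes on the out-neighbours of `v` vanishes at `v`. In the kernel, each
vertex carries the message of the terminal vertex of the Type-I path its own path runs into, and
these `k` terminal messages sum to zero. A non-terminal vertex has an out-neighbour running into
the same Type-I path, and the terminal vertex of `P_i` has, for every `j ≠ i`, an out-neighbour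
running into `P_j`; the vanishing of the sum settles the last terminal message.

For the lower bound, removing the terminal vertices of all Type-I paths but `P_{i₀}` leaves an
acyclic induced subdigraph on `n - k + 1` vertices. Decoding its vertices in reverse topological
order shows that a valid index code is injective on the messages supported there, so it uses at
least `t (n - k + 1)` bits.
-/

open Finset

section IndexCode

variable {V M C C' : Type*}

def IsIndexCode (Arc : V → V → Prop) (E : (V → M) → C) : Prop :=
  ∀ v, ∃ g : C → ({u // Arc v u} → M) → M, ∀ x, g (E x) (fun u => x u.1) = x v

variable {Arc : V → V → Prop}

theorem IsIndexCode.equiv_comp {E : (V → M) → C} (hE : IsIndexCode Arc E) (e : C ≃ C') :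
    IsIndexCode Arc (e ∘ E) := fun v =>
  let ⟨g, hg⟩ := hE v
  ⟨fun c n => g (e.symm c) n, fun x => by simpa using hg x⟩

open Classical in
/-- Decode with any message that is consistent with the broadcast and the side information:
additivity makes the error lie in the kernel and vanish on the out-neighbours. -/
theorem isIndexCode_of_ker [AddCommGroup M] [AddCommGroup C] (E : (V → M) →+ C)
    (hE : ∀ v x, E x = 0 → (∀ u, Arc v u → x u = 0) → x v = 0) : IsIndexCode Arc E := by
  intro v
  refine ⟨fun c n => if h : ∃ x, E x = c ∧ ∀ u, x u.1 = n u then h.choose v else 0,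
    fun x => ?_⟩
  have hx : ∃ x', E x' = E x ∧ ∀ u : {u // Arc v u}, x' u.1 = x u.1 :=
    ⟨x, rfl, fun _ => rfl⟩
  obtain ⟨hEx, hnbr⟩ := hx.choose_spec
  dsimp only
  rw [dif_pos hx, ← sub_eq_zero, ← Pi.sub_apply]
  exact hE v _ (by rw [map_sub, hEx, sub_self]) fun u hu => sub_eq_zero.2 (hnbr ⟨u, hu⟩)

theorem IsIndexCode.eq_of_eqOn_compl [Fintype V] {β : Type*} [LinearOrder β]
    {E : (V → M) → C} (hE : IsIndexCode Arc E) (S : Finset V) (rank : V → β)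
    (hrank : ∀ u ∈ S, ∀ v ∈ S, Arc u v → rank u < rank v) {x y : V → M}
    (hS : ∀ v ∉ S, x v = y v) (hxy : E x = E y) : x = y := by
  classical
  by_contra hne
  obtain ⟨v, hv, hmax⟩ := (univ.filter fun v => x v ≠ y v).exists_max_image rank
    (by simpa [filter_nonempty_iff, funext_iff] using hne)
  rw [mem_filter] at hv
  have hvS : v ∈ S := by_contra fun h => hv.2 (hS v h)
  obtain ⟨g, hg⟩ := hE v
  refine hv.2 ?_
  rw [← hg x, ← hg y, hxy]
  congr 1
  funext ⟨u, hu⟩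
  by_contra hne'
  have huS : u ∈ S := by_contra fun h => hne' (hS u h)
  exact (hmax u (mem_filter.2 ⟨mem_univ _, hne'⟩)).not_gt (hrank v hvS u huS hu)

theorem IsIndexCode.card_pow_card_le [Fintype V] [Fintype M] [Fintype C] [Zero M]
    {β : Type*} [LinearOrder β] {E : (V → M) → C} (hE : IsIndexCode Arc E) (S : Finset V)
    (rank : V → β) (hrank : ∀ u ∈ S, ∀ v ∈ S, Arc u v → rank u < rank v) :
    Fintype.card M ^ S.card ≤ Fintype.card C := by
  classical
  let extend : (S → M) → V → M := fun y v => if h : v ∈ S then y ⟨v, h⟩ else 0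
  have hinj : Function.Injective (E ∘ extend) := fun y y' h => by
    have := hE.eq_of_eqOn_compl S rank hrank (fun v hv => by simp [extend, hv]) h
    funext ⟨v, hv⟩
    simpa [extend, hv] using congrFun this v
  simpa using Fintype.card_le_of_injective _ hinj

end IndexCode

theorem apply_eq_apply_of_forall_succ {α : Type*} {f : ℕ → α} {m n : ℕ}
    (h : ∀ c, m ≤ c → c < n → f c = f (c + 1)) {c : ℕ} (hmc : m ≤ c) (hcn : c ≤ n) :
    f c = f n := by
  induction hcn using Nat.decreasingInduction with
  | self => rfl
  | of_succ c hc ih => exact (h c hmc hc).trans (ih (by omega))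

theorem eq_of_add_eq_zero_zmod_two {ι : Type*} {y z : ι → ZMod 2} (h : y + z = 0) : y = z :=
  funext fun i => CharTwo.add_eq_zero.mp (congrFun h i)

namespace ICCDigraph

variable {k : ℕ} (D : ICCDigraph k) {t : ℕ}

theorem msgI_add (x y : D.Vtx → Fin t → ZMod 2) (i : Fin k) (a : ℕ) :
    D.msgI (x + y) i a = D.msgI x i a + D.msgI y i a := by
  unfold msgI
  split_ifs <;> simp

theorem msgII_add (x y : D.Vtx → Fin t → ZMod 2) (i j : Fin k) (b : ℕ) :
    D.msgII (x + y) i j b = D.msgII x i j b + D.msgII y i j b := by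
  unfold msgII
  split_ifs <;> simp

def codeHom (t : ℕ) : (D.Vtx → Fin t → ZMod 2) →+ (D.CodeIdx → Fin t → ZMod 2) :=
  AddMonoidHom.mk' D.code fun x y => by
    funext c
    rcases c with ⟨i, a⟩ | ⟨p, b⟩ | ⟨p, _⟩ | _ <;>
      simp only [code, msgI_add, msgII_add, Pi.add_apply, sum_add_distrib] <;> abel

theorem msgI_succ (x : D.Vtx → Fin t → ZMod 2) (i : Fin k) {a : ℕ} (ha : a < D.n1 i) :
    D.msgI x i (a + 1) = x (Sum.inl ⟨i, ⟨a, ha⟩⟩) := by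
  simp [msgI, Nat.succ_le_of_lt ha]

theorem msgII_succ (x : D.Vtx → Fin t → ZMod 2) (i j : Fin k) {b : ℕ} (hb : b < D.n2 i j) :
    D.msgII x i j (b + 1) = x (Sum.inr ⟨(i, j), ⟨b, hb⟩⟩) := by
  simp [msgII, Nat.succ_le_of_lt hb]

theorem msgI_n1 (x : D.Vtx → Fin t → ZMod 2) (i : Fin k) :
    D.msgI x i (D.n1 i) = x (D.terminal i) := by
  have := D.hn1 i
  simp [msgI, terminal, this]

variable {D} {x : D.Vtx → Fin t → ZMod 2}

theorem msgI_eq_msgI_n1_of_code_eq_zero (hx : D.code x = 0) (i : Fin k) {c : ℕ} (hc1 : 1 ≤ c)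
    (hc : c ≤ D.n1 i) : D.msgI x i c = D.msgI x i (D.n1 i) := by
  refine apply_eq_apply_of_forall_succ (fun c hc1 hc => ?_) hc1 hc
  obtain ⟨a, rfl⟩ : ∃ a, c = a + 1 := ⟨c - 1, by omega⟩
  exact eq_of_add_eq_zero_zmod_two (congrFun hx (Sum.inl ⟨i, ⟨a, by omega⟩⟩))

theorem msgII_eq_msgI_n1_of_code_eq_zero (hx : D.code x = 0) (i j : Fin k) {c : ℕ}
    (hc1 : 1 ≤ c) (hc : c ≤ D.n2 i j) : D.msgII x i j c = D.msgI x j (D.n1 j) := by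
  have hlink : D.msgII x i j (D.n2 i j) = D.msgI x j (D.q i j) :=
    eq_of_add_eq_zero_zmod_two
      (congrFun hx (Sum.inr (Sum.inr (Sum.inl ⟨(i, j), show 1 ≤ D.n2 i j by omega⟩))))
  rw [apply_eq_apply_of_forall_succ (f := D.msgII x i j) ?_ hc1 hc, hlink,
    msgI_eq_msgI_n1_of_code_eq_zero hx j (D.hq1 i j) (D.hq2 i j)]
  intro c hc1 hc
  obtain ⟨b, rfl⟩ : ∃ b, c = b + 1 := ⟨c - 1, by omega⟩
  exact eq_of_add_eq_zero_zmod_two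
    (congrFun hx (Sum.inr (Sum.inl ⟨(i, j), ⟨b, show b < D.n2 i j - 1 by omega⟩⟩)))

variable (D) in
/-- The Type-I path reached by following the path through `v`: a Type-II path `P_{i,j}` runs
into `P_j`. -/
def endPath : D.Vtx → Fin k
  | Sum.inl ⟨i, _⟩ => i
  | Sum.inr ⟨p, _⟩ => p.2

theorem apply_eq_terminal_of_code_eq_zero (hx : D.code x = 0) (v : D.Vtx) :
    x v = x (D.terminal (D.endPath v)) := by
  rcases v with ⟨i, a⟩ | ⟨⟨i, j⟩, b⟩
  · rw [← D.msgI_succ x i a.isLt, ← D.msgI_n1 x,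
      msgI_eq_msgI_n1_of_code_eq_zero hx i (by omega) a.isLt]
    rfl
  · rw [← D.msgII_succ x i j b.isLt, ← D.msgI_n1 x,
      msgII_eq_msgI_n1_of_code_eq_zero hx i j (by omega) b.isLt]
    rfl

theorem sum_terminal_of_code_eq_zero (hx : D.code x = 0) : ∑ j, x (D.terminal j) = 0 := by
  simpa [code, msgI_n1] using congrFun hx (Sum.inr (Sum.inr (Sum.inr ())))

theorem exists_arc_of_ne_terminal {v : D.Vtx} (hv : v ≠ D.terminal (D.endPath v)) :
    ∃ u, D.Arc v u ∧ D.endPath u = D.endPath v := by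
  rcases v with ⟨i, a⟩ | ⟨p, b⟩
  · have ha : (a : ℕ) + 1 < D.n1 i := by
      by_contra h
      refine hv ?_
      simp only [endPath, terminal, Sum.inl.injEq, Sigma.mk.injEq, heq_eq_eq, true_and]
      ext
      simp only
      omega
    exact ⟨Sum.inl ⟨i, ⟨a + 1, ha⟩⟩, Or.inl ⟨rfl, rfl⟩, rfl⟩
  · by_cases hb : (b : ℕ) + 1 < D.n2 p.1 p.2
    · exact ⟨Sum.inr ⟨p, ⟨b + 1, hb⟩⟩, ⟨rfl, rfl⟩, rfl⟩
    · have := D.hq1 p.1 p.2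
      have := D.hq2 p.1 p.2
      exact ⟨Sum.inl ⟨p.2, ⟨D.q p.1 p.2 - 1, by omega⟩⟩, ⟨rfl, by omega, rfl⟩, rfl⟩

theorem exists_arc_terminal {i j : Fin k} (hij : j ≠ i) :
    ∃ u, D.Arc (D.terminal i) u ∧ D.endPath u = j := by
  by_cases h : D.n2 i j = 0
  · have := D.hq1 i j
    have := D.hq2 i j
    exact ⟨Sum.inl ⟨j, ⟨D.q i j - 1, by omega⟩⟩, Or.inr ⟨hij.symm, rfl, h, rfl⟩, rfl⟩
  · exact ⟨Sum.inr ⟨(i, j), ⟨0, show 0 < D.n2 i j by omega⟩⟩, ⟨rfl, rfl, rfl⟩, rfl⟩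

variable (D) in
theorem isIndexCode_codeHom (t : ℕ) : IsIndexCode D.Arc (D.codeHom t) := by
  refine isIndexCode_of_ker _ fun v x (hx : D.code x = 0) hnbr => ?_
  rw [apply_eq_terminal_of_code_eq_zero hx]
  by_cases hv : v = D.terminal (D.endPath v)
  · have hother : ∀ j ≠ D.endPath v, x (D.terminal j) = 0 := fun j hj => by
      obtain ⟨u, hu, rfl⟩ := D.exists_arc_terminal hj
      rw [← apply_eq_terminal_of_code_eq_zero hx]
      exact hnbr u (hv ▸ hu)
    rw [← sum_terminal_of_code_eq_zero hx,
      sum_eq_single _ (fun j _ hj => hother j hj) (by simp)]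
  · obtain ⟨u, hu, hpath⟩ := D.exists_arc_of_ne_terminal hv
    rw [← hpath, ← apply_eq_terminal_of_code_eq_zero hx]
    exact hnbr u hu

variable (D)

theorem card_codeIdx_add : Fintype.card D.CodeIdx + k = Fintype.card D.Vtx + 1 := by
  have hI : ∑ i, (D.n1 i - 1) + k = ∑ i, D.n1 i := by
    have := sum_congr rfl fun i (_ : i ∈ univ) => Nat.sub_add_cancel (D.hn1 i)
    simpa [sum_add_distrib] using this
  have hII : ∑ p : Fin k × Fin k, (D.n2 p.1 p.2 - 1)
      + #{p : Fin k × Fin k | 1 ≤ D.n2 p.1 p.2} = ∑ p : Fin k × Fin k, D.n2 p.1 p.2 := by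
    rw [card_filter, ← sum_add_distrib]
    exact sum_congr rfl fun p _ => by split_ifs <;> omega
  simp only [CodeIdx, Vtx, Fintype.card_sum, Fintype.card_sigma, Fintype.card_fin,
    Fintype.card_subtype, Fintype.card_unit]
  omega

theorem terminal_injective : Function.Injective D.terminal :=
  fun _ _ h => congrArg Sigma.fst (Sum.inl_injective h)

/-- A topological order of the digraph left after deleting the terminal vertices of the Type-I
paths other than `P_{i₀}`: first the Type-II paths running into `P_{i₀}`, then `P_{i₀}`, then
the other Type-II paths, then the other Type-I paths. -/
def rank (i₀ : Fin k) : D.Vtx → ℕ ×ₗ ℕ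
  | Sum.inl ⟨i, a⟩ => toLex (if i = i₀ then 1 else 3, a)
  | Sum.inr ⟨p, b⟩ => toLex (if p.2 = i₀ then 0 else 2, b)

theorem rank_lt_rank_of_arc (i₀ : Fin k) {u v : D.Vtx}
    (hu : u ∉ (univ.erase i₀).image D.terminal) (huv : D.Arc u v) :
    D.rank i₀ u < D.rank i₀ v := by
  have hterm : ∀ i (a : Fin (D.n1 i)), (a : ℕ) = D.n1 i - 1 →
      Sum.inl ⟨i, a⟩ = D.terminal i :=
    fun i a ha => by simp only [terminal]; congr 2; exact Fin.ext ha
  rcases u with ⟨i, a⟩ | ⟨p, b⟩ <;> rcases v with ⟨j, a'⟩ | ⟨⟨i', j'⟩, b'⟩ <;>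
    simp only [Arc] at huv <;> simp only [rank, Prod.Lex.toLex_lt_toLex]
  · rcases huv with ⟨rfl, h⟩ | ⟨hij, ha, -, -⟩
    · omega
    · obtain rfl : i = i₀ := by
        by_contra hi
        exact hu (mem_image.2 ⟨i, mem_erase.2 ⟨hi, mem_univ _⟩, (hterm i a ha).symm⟩)
      simp [Ne.symm hij]
  · obtain ⟨rfl, ha, -⟩ := huv
    obtain rfl : i = i₀ := by
      by_contra hi
      exact hu (mem_image.2 ⟨i, mem_erase.2 ⟨hi, mem_univ _⟩, (hterm _ a ha).symm⟩)
    have hj : j' ≠ i := by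
      rintro rfl
      have : (b' : ℕ) < D.n2 j' j' := b'.isLt
      have := D.hdiag j'
      omega
    simp [hj]
  · obtain ⟨rfl, -, -⟩ := huv
    split_ifs <;> simp
  · obtain ⟨rfl, h⟩ := huv
    dsimp only at h ⊢
    omega

theorem card_compl_terminals_add (i₀ : Fin k) :
    #((univ.erase i₀).image D.terminal)ᶜ + k = Fintype.card D.Vtx + 1 := by
  have hcard : #((univ.erase i₀).image D.terminal) = k - 1 := by
    rw [card_image_of_injective _ D.terminal_injective, card_erase_of_mem (mem_univ _),
      card_univ, Fintype.card_fin]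
  have hle := card_le_univ ((univ.erase i₀).image D.terminal)
  have := i₀.pos
  rw [card_compl]
  omega

theorem mul_card_le_of_isIndexCode (hk : 1 ≤ k) {t p : ℕ}
    {E : (D.Vtx → Fin t → ZMod 2) → Fin p → ZMod 2} (hE : IsIndexCode D.Arc E) :
    t * (Fintype.card D.Vtx + 1 - k) ≤ p := by
  let i₀ : Fin k := ⟨0, hk⟩
  have h := hE.card_pow_card_le _ (D.rank i₀)
    fun u hu _ _ huv => D.rank_lt_rank_of_arc i₀ (mem_compl.1 hu) huv
  simp only [Fintype.card_fun, Fintype.card_fin, ZMod.card, ← pow_mul] at h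
  rw [← D.card_compl_terminals_add i₀, Nat.add_sub_cancel]
  exact (Nat.pow_le_pow_iff_right (by norm_num)).1 h

end ICCDigraph

/-- For any ICC digraph `D`, the optimal broadcast rate
`β(D) = inf_t β_t(D)` — the infimum over all message lengths `t ≥ 1` and all
valid index codes using `p` bits of the rate `p / t` — equals `n - k + 1`. -/
theorem stmt14 {k : ℕ} (hk : 1 ≤ k) (D : ICCDigraph k) :
    sInf {r : ℝ | ∃ t : ℕ, 1 ≤ t ∧ ∃ p : ℕ,
        (∃ E : (D.Vtx → Fin t → ZMod 2) → Fin p → ZMod 2,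
          ∀ v : D.Vtx,
            ∃ g : (Fin p → ZMod 2) →
                ({u : D.Vtx // D.Arc v u} → Fin t → ZMod 2) → (Fin t → ZMod 2),
              ∀ x, g (E x) (fun u => x u.1) = x v) ∧
        r = (p : ℝ) / (t : ℝ)} =
      (Fintype.card D.Vtx : ℝ) - (k : ℝ) + 1 := by
  have hcard : (Fintype.card D.CodeIdx : ℝ) + k = Fintype.card D.Vtx + 1 := by
    exact_mod_cast D.card_codeIdx_add
  have hcode : IsIndexCode D.Arc ((Fintype.equivFin D.CodeIdx).arrowCongr
      (Equiv.funUnique (Fin 1) (ZMod 2)) ∘ D.codeHom 1) :=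
    (D.isIndexCode_codeHom 1).equiv_comp _
  refine IsLeast.csInf_eq ⟨⟨1, le_rfl, _, ⟨_, hcode⟩, ?_⟩, ?_⟩
  · rw [Nat.cast_one, div_one]
    linarith
  · rintro r ⟨t, ht, p, ⟨E, hE⟩, rfl⟩
    have hkn : k ≤ Fintype.card D.Vtx + 1 := by have := D.card_codeIdx_add; omega
    have hrate : ((t * (Fintype.card D.Vtx + 1 - k) : ℕ) : ℝ) ≤ p := by
      exact_mod_cast D.mul_card_le_of_isIndexCode hk hE
    rw [Nat.cast_mul, Nat.cast_sub hkn] at hrate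
    rw [le_div_iff₀ (by exact_mod_cast ht)]
    push_cast at hrate
    linarith
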